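/- arXiv:1110.2619 — 6 statements merged into one kernel-verified Lean document; each statement's English description precedes it below -/
import Mathlib

section
/- With the Poisson bracket on ℂ[a,b,c,y,z] determined by {a,b}=ab, {a,c}=-ac, {a,y}=ay, {a,z}=-az, {b,y}=by, {b,z}=-bz, {c,y}=cy, {c,z}=-cz, {y,z}=2a²+2bc, {b,c}=2a², the element f = a² + bc + yz is a Casimir: {f, g} = 0 for each generator g ∈ {a,b,c,y,z}. -/
/-- The element a² + bc + yz is a Casimir of the Poisson bracket on ℂ[a,b,c,y,z]. -/
theorem stmt5 {R : Type*} [CommRing R] [Algebra ℂ R]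
    (B : R →ₗ[ℂ] R →ₗ[ℂ] R)
    (skew : ∀ f g : R, B f g = - B g f)
    (leib : ∀ f g h : R, B f (g * h) = B f g * h + g * B f h)
    (a b c y z : R)
    (hab : B a b = a*b) (hac : B a c = -(a*c)) (hay : B a y = a*y)
    (haz : B a z = -(a*z)) (hby : B b y = b*y) (hbz : B b z = -(b*z))
    (hcy : B c y = c*y) (hcz : B c z = -(c*z))
    (hyz : B y z = 2*a^2 + 2*b*c) (hbc : B b c = 2*a^2) :
    ∀ g ∈ ({a,b,c,y,z} : Set R), B (a^2 + b*c + y*z) g = 0 := by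
  have leib' : ∀ f g h : R, B (g*h) f = B g f * h + g * B h f := by
    intro f g h
    rw [skew, leib, skew f g, skew f h]; ring
  have hdiag : ∀ f : R, B f f = 0 := by
    intro f
    have h := skew f f
    have h2 : (B f) f + (B f) f = 0 := by linear_combination h
    calc B f f = ((2:ℂ)⁻¹ * 2) • B f f := by norm_num
    _ = (2:ℂ)⁻¹ • ((2:ℂ) • B f f) := by rw [mul_smul]
    _ = (2:ℂ)⁻¹ • (B f f + B f f) := by rw [two_smul]
    _ = 0 := by rw [h2, smul_zero]
  have hba : B b a = -(a*b) := by rw [skew, hab]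
  have hca : B c a = a*c := by rw [skew, hac]; ring
  have hya : B y a = -(a*y) := by rw [skew, hay]
  have hza : B z a = a*z := by rw [skew, haz]; ring
  have hyb : B y b = -(b*y) := by rw [skew, hby]
  have hzb : B z b = b*z := by rw [skew, hbz]; ring
  have hyc : B y c = -(c*y) := by rw [skew, hcy]
  have hzc : B z c = c*z := by rw [skew, hcz]; ring
  have hzy : B z y = -(2*a^2 + 2*b*c) := by rw [skew, hyz]
  have hcb : B c b = -(2*a^2) := by rw [skew, hbc]
  have hsq : a^2 = a*a := sq a
  intro g hg
  simp only [Set.mem_insert_iff, Set.mem_singleton_iff] at hg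
  rcases hg with rfl | rfl | rfl | rfl | rfl <;>
    simp only [hsq, map_add, LinearMap.add_apply, leib', hdiag, hab, hac, hay, haz, hby,
      hbz, hcy, hcz, hyz, hbc, hba, hca, hya, hza, hyb, hzb, hyc, hzc, hzy, hcb] <;>
    ring
end

section
/- In the associative algebra over ℂ(q) generated by e_α, e_β subject to the Serre relations e_α³e_β - (q²+1+q⁻²)e_α²e_βe_α + (q²+1+q⁻²)e_αe_βe_α² - e_βe_α³ = 0 and e_β²e_α - (q²+q⁻²)e_βe_αe_β + e_αe_β² = 0, define e_γ = e_αe_β - q²e_βe_α and e_δ = e_αe_γ - q⁻²e_γe_α. Then e_γe_β = q⁻²e_βe_γ. -/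
/-- In the algebra generated by e_α, e_β modulo the quantum Serre relations,
with e_γ = e_αe_β - q²e_βe_α, one has e_γe_β = q⁻²e_βe_γ. -/
theorem stmt6 {A : Type*} [Ring A] [Algebra ℂ A] (q : ℂ) (hq : q ≠ 0)
    (eα eβ : A)
    (serre1 : eα^3 * eβ - (q^2 + 1 + q⁻¹^2) • (eα^2 * eβ * eα)
        + (q^2 + 1 + q⁻¹^2) • (eα * eβ * eα^2) - eβ * eα^3 = 0)
    (serre2 : eβ^2 * eα - (q^2 + q⁻¹^2) • (eβ * eα * eβ) + eα * eβ^2 = 0)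
    (eγ : A) (hγ : eγ = eα * eβ - q^2 • (eβ * eα)) :
    eγ * eβ = q⁻¹^2 • (eβ * eγ) := by
  subst hγ
  have hq2 : q⁻¹ * (q⁻¹ * (q * q)) = 1 := by field_simp
  have key : (eα*eβ - q^2•(eβ*eα))*eβ - q⁻¹^2 • (eβ*(eα*eβ - q^2•(eβ*eα)))
      = eβ^2*eα - (q^2+q⁻¹^2)•(eβ*eα*eβ) + eα*eβ^2 := by
    simp only [sub_mul, mul_sub, smul_sub, smul_mul_assoc, mul_smul_comm,
      smul_smul, add_smul, pow_two, mul_assoc, hq2, one_smul]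
    abel
  exact sub_eq_zero.mp (key.trans serre2)
end

section
/- In the associative algebra over ℂ(q) generated by e_α, e_β subject to the Serre relations e_α³e_β - (q²+1+q⁻²)e_α²e_βe_α + (q²+1+q⁻²)e_αe_βe_α² - e_βe_α³ = 0 and e_β²e_α - (q²+q⁻²)e_βe_αe_β + e_αe_β² = 0, define e_γ = e_αe_β - q²e_βe_α and e_δ = e_αe_γ - q⁻²e_γe_α. Then e_β e_δ = e_δ e_β. -/
/-- In the algebra generated by e_α, e_β modulo the quantum Serre relations,
with e_γ = e_αe_β - q²e_βe_α and e_δ = e_αe_γ - q⁻²e_γe_α, one has e_βe_δ = e_δe_β. -/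
theorem stmt7 {A : Type*} [Ring A] [Algebra ℂ A] (q : ℂ) (hq : q ≠ 0)
    (eα eβ : A)
    (serre1 : eα^3 * eβ - (q^2 + 1 + q⁻¹^2) • (eα^2 * eβ * eα)
        + (q^2 + 1 + q⁻¹^2) • (eα * eβ * eα^2) - eβ * eα^3 = 0)
    (serre2 : eβ^2 * eα - (q^2 + q⁻¹^2) • (eβ * eα * eβ) + eα * eβ^2 = 0)
    (eγ eδ : A) (hγ : eγ = eα * eβ - q^2 • (eβ * eα))
    (hδ : eδ = eα * eγ - q⁻¹^2 • (eγ * eα)) :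
    eβ * eδ = eδ * eβ := by
  subst hδ hγ
  rw [← sub_eq_zero]
  have key : eβ * (eα * (eα * eβ - q^2 • (eβ * eα)) - q⁻¹^2 • ((eα * eβ - q^2 • (eβ * eα)) * eα))
      - (eα * (eα * eβ - q^2 • (eβ * eα)) - q⁻¹^2 • ((eα * eβ - q^2 • (eβ * eα)) * eα)) * eβ
      = (eβ^2 * eα - (q^2 + q⁻¹^2) • (eβ * eα * eβ) + eα * eβ^2) * eα
        - eα * (eβ^2 * eα - (q^2 + q⁻¹^2) • (eβ * eα * eβ) + eα * eβ^2) := by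
    simp only [pow_two, mul_sub, sub_mul, add_mul, mul_add, smul_mul_assoc, mul_smul_comm,
      smul_sub, smul_add, smul_smul, mul_assoc]
    match_scalars <;> (field_simp; try ring)
  rw [key, serre2, zero_mul, mul_zero, sub_zero]
end

section
/- In the associative algebra over ℂ(q) generated by e_α, e_β subject to the quantum Serre relations, with e_γ = e_αe_β - q²e_βe_α and e_δ = e_αe_γ - q⁻²e_γe_α, one has e_α e_δ = e_δ e_α and e_γ e_δ = e_δ e_γ. -/
/-- In the algebra generated by e_α, e_β modulo the quantum Serre relations,
with e_γ = e_αe_β - q²e_βe_α and e_δ = e_αe_γ - q⁻²e_γe_α, one has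
e_αe_δ = e_δe_α and e_γe_δ = e_δe_γ. -/
theorem stmt8 {A : Type*} [Ring A] [Algebra ℂ A] (q : ℂ) (hq : q ≠ 0)
    (eα eβ : A)
    (serre1 : eα^3 * eβ - (q^2 + 1 + q⁻¹^2) • (eα^2 * eβ * eα)
        + (q^2 + 1 + q⁻¹^2) • (eα * eβ * eα^2) - eβ * eα^3 = 0)
    (serre2 : eβ^2 * eα - (q^2 + q⁻¹^2) • (eβ * eα * eβ) + eα * eβ^2 = 0)
    (eγ eδ : A) (hγ : eγ = eα * eβ - q^2 • (eβ * eα))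
    (hδ : eδ = eα * eγ - q⁻¹^2 • (eγ * eα)) :
    eα * eδ = eδ * eα ∧ eγ * eδ = eδ * eγ := by
  set L1 : A := eα^3 * eβ - (q^2 + 1 + q⁻¹^2) • (eα^2 * eβ * eα)
        + (q^2 + 1 + q⁻¹^2) • (eα * eβ * eα^2) - eβ * eα^3 with hL1
  set L2 : A := eβ^2 * eα - (q^2 + q⁻¹^2) • (eβ * eα * eβ) + eα * eβ^2 with hL2
  subst hδ hγ
  constructor
  · have key : eα * (eα * (eα * eβ - q ^ 2 • (eβ * eα)) -
        q⁻¹ ^ 2 • ((eα * eβ - q ^ 2 • (eβ * eα)) * eα)) -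
        (eα * (eα * eβ - q ^ 2 • (eβ * eα)) -
        q⁻¹ ^ 2 • ((eα * eβ - q ^ 2 • (eβ * eα)) * eα)) * eα = L1 := by
      rw [hL1]
      simp only [pow_succ, pow_zero, one_mul, mul_sub, sub_mul, mul_add, add_mul,
        smul_sub, smul_add, smul_smul, smul_mul_assoc, mul_smul_comm, mul_assoc]
      match_scalars <;> field_simp <;> ring
    exact sub_eq_zero.mp (key.trans serre1)
  · have key : (eα * eβ - q ^ 2 • (eβ * eα)) *
        (eα * (eα * eβ - q ^ 2 • (eβ * eα)) -
          q⁻¹ ^ 2 • ((eα * eβ - q ^ 2 • (eβ * eα)) * eα)) -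
        (eα * (eα * eβ - q ^ 2 • (eβ * eα)) -
          q⁻¹ ^ 2 • ((eα * eβ - q ^ 2 • (eβ * eα)) * eα)) *
        (eα * eβ - q ^ 2 • (eβ * eα)) =
        (-(q^2)) • (eβ * L1) + L1 * eβ - eα^2 * L2
          + (1 + q^2) • (eα * L2 * eα) - q^2 • (L2 * eα^2) := by
      rw [hL1, hL2]
      simp only [pow_succ, pow_zero, one_mul, mul_sub, sub_mul, mul_add, add_mul,
        smul_sub, smul_add, smul_smul, smul_mul_assoc, mul_smul_comm, neg_smul,
        neg_mul, mul_neg, sub_eq_add_neg, neg_add, neg_neg, mul_assoc]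
      match_scalars <;> field_simp <;> ring
    have hz : (eα * eβ - q ^ 2 • (eβ * eα)) *
        (eα * (eα * eβ - q ^ 2 • (eβ * eα)) -
          q⁻¹ ^ 2 • ((eα * eβ - q ^ 2 • (eβ * eα)) * eα)) -
        (eα * (eα * eβ - q ^ 2 • (eβ * eα)) -
          q⁻¹ ^ 2 • ((eα * eβ - q ^ 2 • (eβ * eα)) * eα)) *
        (eα * eβ - q ^ 2 • (eβ * eα)) = 0 := by
      rw [key, serre1, serre2]
      simp
    exact sub_eq_zero.mp hz
end

section
/- Let q be a nonzero complex number, not a root of unity. In the associative ℂ-algebra generated by a,b,c,y,z with relations ab=q²ba, ac=q⁻²ca, ay=q²ya, az=q⁻²za, by=q²yb, bz=q⁻²zb, cy=q²yc, cz=q⁻²zc, bc-cb=(q⁴-1)a², yz-zy=(q⁴-1)a²+(q⁴-1)bc, the element Ω = a² + bc + yz is central: it commutes with each of a, b, c, y, z. -/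
/-- Extended form of a q-commutation relation, for rewriting inside products. -/
lemma ext_rel {A : Type*} [Ring A] [Algebra ℂ A] {u v : A} {σ : ℂ}
    (h : u*v = σ • (v*u)) (x : A) : u*(v*x) = σ • (v*(u*x)) := by
  rw [← mul_assoc, h, smul_mul_assoc, mul_assoc]

/-- In the algebra with the quantum sphere relations (without the inhomogeneous one),
the element Ω = a² + bc + yz is central. -/
theorem stmt12 {A : Type*} [Ring A] [Algebra ℂ A] (q : ℂ) (hq : q ≠ 0)
    (hroot : ∀ n : ℕ, 0 < n → q^n ≠ 1)
    (a b c y z : A)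
    (h1 : a*b = q^2 • (b*a)) (h2 : a*c = q⁻¹^2 • (c*a))
    (h3 : a*y = q^2 • (y*a)) (h4 : a*z = q⁻¹^2 • (z*a))
    (h5 : b*y = q^2 • (y*b)) (h6 : b*z = q⁻¹^2 • (z*b))
    (h7 : c*y = q^2 • (y*c)) (h8 : c*z = q⁻¹^2 • (z*c))
    (h9 : b*c - c*b = (q^4 - 1) • (a^2))
    (h10 : y*z - z*y = (q^4 - 1) • (a^2) + (q^4 - 1) • (b*c)) :
    ∀ x ∈ ({a,b,c,y,z} : Set A), Commute (a^2 + b*c + y*z) x := by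
  have hq2 : q^2 * q⁻¹^2 = 1 := by field_simp
  -- positive (inverse-free) forms of the relations, oriented by the order y < b < a < c < z
  have h2' : c*a = q^2 • (a*c) := by rw [h2, smul_smul, hq2, one_smul]
  have h4' : z*a = q^2 • (a*z) := by rw [h4, smul_smul, hq2, one_smul]
  have h6' : z*b = q^2 • (b*z) := by rw [h6, smul_smul, hq2, one_smul]
  have h8' : z*c = q^2 • (c*z) := by rw [h8, smul_smul, hq2, one_smul]
  have h9' : c*b = b*c - (q^4 - 1) • (a*a) := by
    rw [← pow_two, ← h9]; abel
  have h10' : z*y = y*z - ((q^4 - 1) • (a*a) + (q^4 - 1) • (b*c)) := by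
    rw [← pow_two, ← h10]; abel
  -- extended forms
  have e1 := ext_rel h1
  have e2 := ext_rel h2'
  have e3 := ext_rel h3
  have e4 := ext_rel h4'
  have e5 := ext_rel h5
  have e6 := ext_rel h6'
  have e7 := ext_rel h7
  have e8 := ext_rel h8'
  have e9 : ∀ x : A, c*(b*x) = b*(c*x) - (q^4 - 1) • (a*(a*x)) := by
    intro x
    rw [← mul_assoc, h9', sub_mul, smul_mul_assoc, mul_assoc, mul_assoc]
  have e10 : ∀ x : A, z*(y*x) = y*(z*x) - ((q^4 - 1) • (a*(a*x)) + (q^4 - 1) • (b*(c*x))) := by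
    intro x
    rw [← mul_assoc, h10', sub_mul, add_mul, smul_mul_assoc, smul_mul_assoc,
      mul_assoc, mul_assoc, mul_assoc]
  rintro x hx
  simp only [Set.mem_insert_iff, Set.mem_singleton_iff] at hx
  rcases hx with rfl | rfl | rfl | rfl | rfl <;>
  · rw [commute_iff_eq]
    simp only [pow_two, add_mul, mul_add, mul_assoc,
      h1, h2', h3, h4', h5, h6', h7, h8', h9', h10',
      e1, e2, e3, e4, e5, e6, e7, e8, e9, e10,
      smul_add, smul_sub, smul_smul, mul_smul_comm, smul_mul_assoc,
      sub_mul, mul_sub, add_mul]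
    try match_scalars <;> ring
end

section
/- Let q ≠ 0 with q^{2s} = -q⁻² (s = (α,λ)). Then the Shapovalov-type matrix coefficient formula holds: (-1)^{k+m} q^{(k+m)s + m(m-1)+k(k-1)} · ∏_{i=1}^k [s+1-i]_q · [k]_q! · ∏_{i=1}^m [s+1-i]_q · [m]_q! = q^{m(m-2)+k(k-2)} (1/(q-q⁻¹))^{k+m} [2k]_q!! [2m]_q!!, for all nonnegative integers k, m. -/
open Finset

/-! With `x = q^s · q` one has `x² = -1`, so `x⁻¹ = -x` and the quantum number
`[s + 1 - i]_q = (x q^{-i} - x⁻¹ q^i)/(q - q⁻¹)` equals `x [q^i + q^{-i}]/(q - q⁻¹)`.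
Multiplying by `[i]_q` turns `(q^i + q^{-i})(q^i - q^{-i})` into `q^{2i} - q^{-2i}`, i.e. each
factor of `[s+1-i]_q [i]_q` is, up to `-q^s` and a power of `q`, a factor `[2i]_q` of the double
factorial. The formula for a single index `n` follows by induction, and the theorem is the
product of the formulas for `k` and `m`. -/

section
variable {K : Type*} [Field K] {q Qs : K}

lemma ne_zero_of_sq_mul_sq_eq_neg_one (hs : Qs ^ 2 * q ^ 2 = -1) : Qs ≠ 0 ∧ q ≠ 0 := by
  constructor <;> rintro rfl <;> simp at hs

lemma neg_mul_shifted_qNum_mul_qNum (hs : Qs ^ 2 * q ^ 2 = -1) {a : K} (ha : a ≠ 0) :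
    -Qs * ((Qs * q * a⁻¹ - (Qs * q * a⁻¹)⁻¹) / (q - q⁻¹)) * ((a - a⁻¹) / (q - q⁻¹)) =
      q⁻¹ * (1 / (q - q⁻¹)) * ((a ^ 2 - (a ^ 2)⁻¹) / (q - q⁻¹)) := by
  obtain ⟨hQs, hq⟩ := ne_zero_of_sq_mul_sq_eq_neg_one hs
  have key : -Qs * (Qs * q * a⁻¹ - (Qs * q * a⁻¹)⁻¹) * (a - a⁻¹) = q⁻¹ * (a ^ 2 - (a ^ 2)⁻¹) := by
    field_simp
    linear_combination (1 - a ^ 2) * hs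
  calc _ = -Qs * (Qs * q * a⁻¹ - (Qs * q * a⁻¹)⁻¹) * (a - a⁻¹) / (q - q⁻¹) / (q - q⁻¹) := by ring
    _ = _ := by rw [key]; ring

variable (q Qs)

def shapovalovCoeff (n : ℕ) : K :=
  (-1) ^ n * Qs ^ n * q ^ ((n : ℤ) * ((n : ℤ) - 1)) *
    (∏ i ∈ range n, ((Qs * q * (q ^ (i + 1))⁻¹ - (Qs * q * (q ^ (i + 1))⁻¹)⁻¹) / (q - q⁻¹))) *
    (∏ i ∈ range n, ((q ^ (i + 1) - (q ^ (i + 1))⁻¹) / (q - q⁻¹)))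

def doubleFactorialCoeff (n : ℕ) : K :=
  q ^ ((n : ℤ) * ((n : ℤ) - 2)) * (1 / (q - q⁻¹)) ^ n *
    (∏ i ∈ range n, ((q ^ (2 * (i + 1)) - (q ^ (2 * (i + 1)))⁻¹) / (q - q⁻¹)))

variable {q}

lemma shapovalovCoeff_succ (hq : q ≠ 0) (n : ℕ) :
    shapovalovCoeff q Qs (n + 1) = shapovalovCoeff q Qs n *
      (q ^ (2 * n) * (-Qs * ((Qs * q * (q ^ (n + 1))⁻¹ - (Qs * q * (q ^ (n + 1))⁻¹)⁻¹) / (q - q⁻¹)) *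
        ((q ^ (n + 1) - (q ^ (n + 1))⁻¹) / (q - q⁻¹)))) := by
  have hexp : ((n + 1 : ℕ) : ℤ) * (((n + 1 : ℕ) : ℤ) - 1) = (n : ℤ) * ((n : ℤ) - 1) + (2 * n : ℕ) := by
    push_cast; ring
  rw [shapovalovCoeff, shapovalovCoeff, hexp, zpow_add₀ hq, zpow_natCast, prod_range_succ,
    prod_range_succ]
  ring

lemma doubleFactorialCoeff_succ (hq : q ≠ 0) (n : ℕ) :
    doubleFactorialCoeff q (n + 1) = doubleFactorialCoeff q n *
      (q ^ (2 * n) * (q⁻¹ * (1 / (q - q⁻¹)) *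
        (((q ^ (n + 1)) ^ 2 - ((q ^ (n + 1)) ^ 2)⁻¹) / (q - q⁻¹)))) := by
  have hexp : ((n + 1 : ℕ) : ℤ) * (((n + 1 : ℕ) : ℤ) - 2) = (n : ℤ) * ((n : ℤ) - 2) + (2 * n : ℕ) + (-1) := by
    push_cast; ring
  rw [doubleFactorialCoeff, doubleFactorialCoeff, hexp, zpow_add₀ hq, zpow_add₀ hq, zpow_natCast,
    zpow_neg_one, prod_range_succ, ← pow_mul, mul_comm (n + 1) 2]
  ring

theorem shapovalovCoeff_eq_doubleFactorialCoeff (hs : Qs ^ 2 * q ^ 2 = -1) (n : ℕ) :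
    shapovalovCoeff q Qs n = doubleFactorialCoeff q n := by
  have hq := (ne_zero_of_sq_mul_sq_eq_neg_one hs).2
  induction n with
  | zero => simp [shapovalovCoeff, doubleFactorialCoeff]
  | succ n ih =>
    rw [shapovalovCoeff_succ Qs hq, doubleFactorialCoeff_succ hq, ih,
      neg_mul_shifted_qNum_mul_qNum hs (pow_ne_zero _ hq)]

end

theorem stmt17_general (q Qs : ℂ) (hq : q ≠ 0)
    (hs : Qs^2 = -(q⁻¹^2)) (k m : ℕ) :
    (-1 : ℂ)^(k+m) * Qs^(k+m) *
      q^((k:ℤ)*((k:ℤ)-1) + (m:ℤ)*((m:ℤ)-1)) *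
      (∏ i ∈ range k, ((Qs * q * (q^(i+1))⁻¹ - (Qs * q * (q^(i+1))⁻¹)⁻¹) / (q - q⁻¹))) *
      (∏ i ∈ range k, ((q^(i+1) - (q^(i+1))⁻¹) / (q - q⁻¹))) *
      (∏ i ∈ range m, ((Qs * q * (q^(i+1))⁻¹ - (Qs * q * (q^(i+1))⁻¹)⁻¹) / (q - q⁻¹))) *
      (∏ i ∈ range m, ((q^(i+1) - (q^(i+1))⁻¹) / (q - q⁻¹))) =
    q^((k:ℤ)*((k:ℤ)-2) + (m:ℤ)*((m:ℤ)-2)) * (1/(q - q⁻¹))^(k+m) *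
      (∏ i ∈ range k, ((q^(2*(i+1)) - (q^(2*(i+1)))⁻¹) / (q - q⁻¹))) *
      (∏ i ∈ range m, ((q^(2*(i+1)) - (q^(2*(i+1)))⁻¹) / (q - q⁻¹))) := by
  have hs' : Qs ^ 2 * q ^ 2 = -1 := by rw [hs]; field_simp
  have hkm := congr_arg₂ (· * ·) (shapovalovCoeff_eq_doubleFactorialCoeff Qs hs' k)
    (shapovalovCoeff_eq_doubleFactorialCoeff Qs hs' m)
  simp only [shapovalovCoeff, doubleFactorialCoeff] at hkm
  rw [zpow_add₀ hq, zpow_add₀ hq]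
  linear_combination hkm

/-- The Shapovalov-type matrix coefficient formula:
(-1)^{k+m} q^{(k+m)s+m(m-1)+k(k-1)} ∏[s+1-i]_q [k]_q! ∏[s+1-i]_q [m]_q!
  = q^{m(m-2)+k(k-2)} (q-q⁻¹)^{-(k+m)} [2k]_q!! [2m]_q!!,
where Qs = q^s is a fixed square root of -q⁻². -/
theorem stmt17 (q Qs : ℂ) (hq : q ≠ 0)
    (hroot : ∀ n : ℕ, 0 < n → q^n ≠ 1)
    (hs : Qs^2 = -(q⁻¹^2)) (k m : ℕ) :
    (-1 : ℂ)^(k+m) * Qs^(k+m) *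
      q^((k:ℤ)*((k:ℤ)-1) + (m:ℤ)*((m:ℤ)-1)) *
      (∏ i ∈ range k, ((Qs * q * (q^(i+1))⁻¹ - (Qs * q * (q^(i+1))⁻¹)⁻¹) / (q - q⁻¹))) *
      (∏ i ∈ range k, ((q^(i+1) - (q^(i+1))⁻¹) / (q - q⁻¹))) *
      (∏ i ∈ range m, ((Qs * q * (q^(i+1))⁻¹ - (Qs * q * (q^(i+1))⁻¹)⁻¹) / (q - q⁻¹))) *
      (∏ i ∈ range m, ((q^(i+1) - (q^(i+1))⁻¹) / (q - q⁻¹))) =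
    q^((k:ℤ)*((k:ℤ)-2) + (m:ℤ)*((m:ℤ)-2)) * (1/(q - q⁻¹))^(k+m) *
      (∏ i ∈ range k, ((q^(2*(i+1)) - (q^(2*(i+1)))⁻¹) / (q - q⁻¹))) *
      (∏ i ∈ range m, ((q^(2*(i+1)) - (q^(2*(i+1)))⁻¹) / (q - q⁻¹))) :=
  stmt17_general q Qs hq hs k m
end
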